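/- Let A ∈ ℝ^{m×n}, b ∈ ℝ^m, λ_g > 0, and let 𝒢 ⊆ ℝ^n be a nonempty closed convex set. Suppose g* ∈ 𝒢 minimizes ‖Ag − b‖² + λ_g‖g‖₁ over 𝒢, where ‖g‖₁ denotes the 1-norm. Define ρ_c := λ_g / (2‖Ag* − b‖) if Ag* ≠ b, and ρ_c := λ_g/2 otherwise. Then g* also minimizes ‖Ag − b‖ + ρ_c‖g‖₁ over 𝒢. -/

import Mathlib

/-!
Both `g ↦ ‖Ag − b‖` and `‖·‖₁` are convex. Moving from `g*` a step `θ` towards any `g ∈ 𝒢` and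
letting `θ → 0` turns the optimality of `g*` for `‖Ag − b‖² + λ_g‖g‖₁` into the first-order
inequality `2‖Ag* − b‖ (‖Ag* − b‖ − ‖Ag − b‖) ≤ λ_g (‖g‖₁ − ‖g*‖₁)`. Dividing by `2‖Ag* − b‖`
gives the claim; if `Ag* = b` the inequality says that `g*` minimizes `‖·‖₁` on `𝒢`.
-/

open Matrix

/-- Euclidean norm of a vector in `ℝ^n`. -/
noncomputable def enorm {n : ℕ} (x : Fin n → ℝ) : ℝ := Real.sqrt (∑ i, x i ^ 2)

/-- 1-norm of a vector in `ℝ^n`. -/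
def onenorm {n : ℕ} (x : Fin n → ℝ) : ℝ := ∑ i, |x i|

lemma enorm_eq_norm_toLp {n : ℕ} (x : Fin n → ℝ) : _root_.enorm x = ‖WithLp.toLp 2 x‖ := by
  simp [_root_.enorm, EuclideanSpace.norm_eq]

lemma onenorm_eq_norm_toLp {n : ℕ} (x : Fin n → ℝ) : onenorm x = ‖WithLp.toLp 1 x‖ := by
  simp [onenorm, PiLp.norm_eq_of_L1]

lemma enorm_sub_eq_zero_iff {n : ℕ} {x y : Fin n → ℝ} : _root_.enorm (x - y) = 0 ↔ x = y := by
  simp [enorm_eq_norm_toLp, sub_eq_zero]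

lemma enorm_nonneg {n : ℕ} (x : Fin n → ℝ) : 0 ≤ _root_.enorm x := Real.sqrt_nonneg _

lemma convexOn_onenorm (n : ℕ) : ConvexOn ℝ Set.univ (onenorm : (Fin n → ℝ) → ℝ) := by
  have := (convexOn_norm convex_univ).comp_linearMap
    (WithLp.linearEquiv 1 ℝ (Fin n → ℝ)).symm.toLinearMap
  rw [show onenorm = fun x : Fin n → ℝ => ‖WithLp.toLp 1 x‖ from funext onenorm_eq_norm_toLp]
  simpa [Function.comp_def] using this

lemma convexOn_enorm_mulVec_sub {m n : ℕ} (A : Matrix (Fin m) (Fin n) ℝ) (b : Fin m → ℝ) :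
    ConvexOn ℝ Set.univ fun g => _root_.enorm (A *ᵥ g - b) := by
  have := ((convexOn_norm convex_univ).comp_linearMap
    (WithLp.linearEquiv 2 ℝ (Fin m → ℝ)).symm.toLinearMap).comp_affineMap
    ((Matrix.mulVecLin A).toAffineMap - AffineMap.const ℝ (Fin n → ℝ) b)
  simpa [Function.comp_def, enorm_eq_norm_toLp] using this

lemma le_of_forall_pos_le_add_mul {u v w : ℝ} (h : ∀ θ : ℝ, 0 < θ → θ ≤ 1 → u ≤ v + θ * w) :
    u ≤ v := by
  have hlim : Filter.Tendsto (fun θ : ℝ => v + θ * w) (nhdsWithin 0 (Set.Ioi 0)) (nhds v) := by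
    simpa using (tendsto_const_nhds (x := v)).add
      ((tendsto_nhdsWithin_of_tendsto_nhds (a := (0 : ℝ)) Filter.tendsto_id).mul_const w)
  refine ge_of_tendsto hlim ?_
  filter_upwards [Ioc_mem_nhdsGT zero_lt_one] with θ hθ using h θ hθ.1 hθ.2

section
variable {E : Type*} [AddCommGroup E] [Module ℝ E] {s : Set E} {f h : E → ℝ} {x y : E}

theorem ConvexOn.two_mul_mul_sub_le_of_isMinOn_sq_add (hf : ConvexOn ℝ s f)
    (hh : ConvexOn ℝ s h) (hf₀ : ∀ z ∈ s, 0 ≤ f z) (hmin : IsMinOn (fun z => f z ^ 2 + h z) s x)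
    (hx : x ∈ s) (hy : y ∈ s) : 2 * f x * (f x - f y) ≤ h y - h x := by
  refine le_of_forall_pos_le_add_mul (w := (f x - f y) ^ 2) fun θ hθ hθ₁ => ?_
  have hθ' : 0 ≤ 1 - θ := sub_nonneg.2 hθ₁
  have hseg : (1 - θ) • x + θ • y ∈ s := hf.1 hx hy hθ' hθ.le (by ring)
  have hfseg := hf.2 hx hy hθ' hθ.le (by ring)
  have hhseg := hh.2 hx hy hθ' hθ.le (by ring)
  have hsq : f ((1 - θ) • x + θ • y) ^ 2 ≤ ((1 - θ) * f x + θ * f y) ^ 2 :=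
    pow_le_pow_left₀ (hf₀ _ hseg) hfseg 2
  have := hmin hseg
  simp only [smul_eq_mul, Set.mem_ofPred_eq] at hfseg hhseg this
  nlinarith

theorem ConvexOn.isMinOn_add_mul_of_isMinOn_sq_add_mul (hf : ConvexOn ℝ s f)
    (hh : ConvexOn ℝ s h) (hf₀ : ∀ z ∈ s, 0 ≤ f z) {c ρ : ℝ} (hc : 0 < c)
    (hmin : IsMinOn (fun z => f z ^ 2 + c * h z) s x) (hx : x ∈ s)
    (hρ₁ : f x ≠ 0 → ρ = c / (2 * f x)) (hρ₂ : f x = 0 → ρ = c / 2) :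
    IsMinOn (fun z => f z + ρ * h z) s x := by
  intro y hy
  have key := hf.two_mul_mul_sub_le_of_isMinOn_sq_add (hh.smul hc.le) hf₀ hmin hx hy
  simp only [smul_eq_mul] at key
  show f x + ρ * h x ≤ f y + ρ * h y
  rcases (hf₀ x hx).eq_or_lt with hfx | hfx
  · rw [← hfx] at key
    have hhxy : h x ≤ h y := le_of_mul_le_mul_left (by linarith) hc
    rw [hρ₂ hfx.symm, ← hfx]
    linarith [hf₀ y hy, mul_le_mul_of_nonneg_left hhxy (by positivity : 0 ≤ c / 2)]
  · have hρ : c = 2 * f x * ρ := by rw [hρ₁ hfx.ne']; field_simp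
    have : 2 * f x * (f x - f y) ≤ 2 * f x * (ρ * (h y - h x)) :=
      key.trans_eq (by rw [hρ]; ring)
    linarith [le_of_mul_le_mul_left this (by positivity)]

end

theorem one_norm_regularization_robustness_general
    (m n : ℕ) (A : Matrix (Fin m) (Fin n) ℝ) (b : Fin m → ℝ)
    (lamg : ℝ) (hlamg : 0 < lamg)
    (𝒢 : Set (Fin n → ℝ)) (h𝒢cv : Convex ℝ 𝒢)
    (gs : Fin n → ℝ) (hgs : gs ∈ 𝒢)
    (hmin : ∀ g ∈ 𝒢,
      (_root_.enorm (A.mulVec gs - b)) ^ 2 + lamg * onenorm gs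
        ≤ (_root_.enorm (A.mulVec g - b)) ^ 2 + lamg * onenorm g)
    (ρc : ℝ)
    (hρc1 : A.mulVec gs ≠ b → ρc = lamg / (2 * _root_.enorm (A.mulVec gs - b)))
    (hρc2 : A.mulVec gs = b → ρc = lamg / 2) :
    ∀ g ∈ 𝒢,
      _root_.enorm (A.mulVec gs - b) + ρc * onenorm gs
        ≤ _root_.enorm (A.mulVec g - b) + ρc * onenorm g :=
  ConvexOn.isMinOn_add_mul_of_isMinOn_sq_add_mul
    ((convexOn_enorm_mulVec_sub A b).subset (Set.subset_univ _) h𝒢cv)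
    ((convexOn_onenorm n).subset (Set.subset_univ _) h𝒢cv) (fun _ _ => enorm_nonneg _)
    hlamg hmin hgs (fun h => hρc1 (enorm_sub_eq_zero_iff.not.1 h))
    (fun h => hρc2 (enorm_sub_eq_zero_iff.1 h))

/-- Theorem 3 of the paper (robustness induced by 1-norm regularization): a minimizer of
the 1-norm-regularized problem also minimizes the conic objective `‖Ag − b‖ + ρ_c‖g‖₁`
with `ρ_c` given by eq. (38). -/
theorem one_norm_regularization_robustness
    (m n : ℕ) (A : Matrix (Fin m) (Fin n) ℝ) (b : Fin m → ℝ)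
    (lamg : ℝ) (hlamg : 0 < lamg)
    (𝒢 : Set (Fin n → ℝ)) (h𝒢ne : 𝒢.Nonempty) (h𝒢cl : IsClosed 𝒢) (h𝒢cv : Convex ℝ 𝒢)
    (gs : Fin n → ℝ) (hgs : gs ∈ 𝒢)
    (hmin : ∀ g ∈ 𝒢,
      (_root_.enorm (A.mulVec gs - b)) ^ 2 + lamg * onenorm gs
        ≤ (_root_.enorm (A.mulVec g - b)) ^ 2 + lamg * onenorm g)
    (ρc : ℝ)
    (hρc1 : A.mulVec gs ≠ b → ρc = lamg / (2 * _root_.enorm (A.mulVec gs - b)))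
    (hρc2 : A.mulVec gs = b → ρc = lamg / 2) :
    ∀ g ∈ 𝒢,
      _root_.enorm (A.mulVec gs - b) + ρc * onenorm gs
        ≤ _root_.enorm (A.mulVec g - b) + ρc * onenorm g :=
  one_norm_regularization_robustness_general m n A b lamg hlamg 𝒢 h𝒢cv gs hgs hmin ρc hρc1 hρc2
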